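/- Let A, A' ∈ U(n) and γ: [0,1] → Mat_n(ℂ) continuous with essentially bounded derivative, satisfying A'γ(0) = γ(1)A. Then the multiplication operator M_γ on L²([0,1],ℂⁿ) satisfies: M_γ J_A − J_{A'} M_γ is Hilbert-Schmidt, where J_A = i·sign(−iD_A) and D_A is d/dt with boundary condition f(1) = −Af(0). -/

import Mathlib

/-!
Write `α = λ_r + k - ½` and `β = λ'_s + k' - ½` for the frequencies of `b (k, r)` and `b' (k', s)`.
The `b' (k', s)`-coefficient of `(M_γ J - J' M_γ) b (k, r)` is `i (sign α - sign β)` times that of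
`M_γ b (k, r)`; it vanishes unless the signs differ, and then `|α| ≤ |α - β|`. Integration by parts,
whose boundary terms cancel because `A' γ(0) = γ(1) A`, multiplies the coefficient of `M_γ b (k, r)`
by `-2πi (α - β)` to give that of `M_γ̇ b (k, r)`. By Parseval,
`π |α| ‖(M_γ J - J' M_γ) b (k, r)‖ ≤ ‖M_γ̇ b (k, r)‖ ≤ sup ‖γ̇‖`, and `∑ 1 / α²` over the
terms with `α ≠ 0` (all but finitely many) converges.
-/

open MeasureTheory Complex

/-- Lebesgue measure restricted to the unit interval. -/
noncomputable def unitMeasure : MeasureTheory.Measure ℝ :=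
  MeasureTheory.volume.restrict (Set.Ioc (0 : ℝ) 1)

/-- The eigenfunction `φ_k(t) = exp(2πi(λ + k - ½)t)·v` of the boundary value
operator `D_A = d/dt`, `f(1) = -A f(0)`. -/
noncomputable def eigenFun {n : ℕ} (lam : ℝ) (k : ℤ) (v : EuclideanSpace ℂ (Fin n)) :
    ℝ → EuclideanSpace ℂ (Fin n) :=
  fun t => Complex.exp (2 * Real.pi * Complex.I * (lam + k - 1 / 2) * t) • v

open scoped InnerProductSpace ComplexConjugate

lemma abs_mul_abs_sign_sub_sign_le (α β : ℝ) :
    |α| * |Real.sign α - Real.sign β| ≤ 2 * |α - β| := by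
  rcases lt_trichotomy α 0 with hα | hα | hα <;> rcases lt_trichotomy β 0 with hβ | hβ | hβ <;>
    simp only [Real.sign_of_neg, Real.sign_of_pos, Real.sign_zero, *] <;>
    norm_num [abs_of_neg, abs_of_pos, *] <;>
    cases abs_cases (α - β) <;> linarith

lemma pi_mul_abs_mul_norm_sign_sub_sign_mul_le (α β : ℝ) (z : ℂ) :
    Real.pi * |α| * ‖(I * Real.sign α - I * Real.sign β) * z‖ ≤
      ‖-(2 * Real.pi * I * (α - β : ℝ)) * z‖ := by
  have hsign : ‖I * Real.sign α - I * Real.sign β‖ = |Real.sign α - Real.sign β| := by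
    rw [← mul_sub, norm_mul, norm_I, one_mul, ← ofReal_sub, norm_real, Real.norm_eq_abs]
  have hfreq : ‖-(2 * Real.pi * I * (α - β : ℝ))‖ = 2 * Real.pi * |α - β| := by
    simp only [norm_neg, norm_mul, norm_ofNat, norm_real, Real.norm_eq_abs, norm_I,
      abs_of_pos Real.pi_pos, mul_one]
  rw [norm_mul, norm_mul, hsign, hfreq]
  have := mul_le_mul_of_nonneg_right (abs_mul_abs_sign_sub_sign_le α β)
    (by positivity : 0 ≤ Real.pi * ‖z‖)
  linarith

lemma summable_sq_of_abs_intCast_add_mul_le {ι : Type*} [Finite ι] (a : ι → ℝ) {f : ℤ × ι → ℝ}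
    {C : ℝ} (hf : ∀ p, |p.1 + a p.2| * |f p| ≤ C) : Summable fun p => f p ^ 2 := by
  have hfin : {p : ℤ × ι | (p.1 : ℝ) + a p.2 = 0}.Finite := by
    refine Set.Finite.of_finite_image (f := Prod.snd) (Set.toFinite _) fun p hp q hq hpq => ?_
    have : (p.1 : ℝ) = q.1 := by simp only [Set.mem_ofPred_eq] at hp hq; rw [hpq] at hp; linarith
    exact Prod.ext (Int.cast_injective this) hpq
  have hg : Summable fun p : ℤ × ι => C ^ 2 * (1 / |p.1 + a p.2| ^ (2 : ℝ)) := by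
    refine Summable.mul_left _ ((summable_prod_of_nonneg fun _ => by positivity).2
      ⟨fun _ => Summable.of_finite, ?_⟩)
    have := Fintype.ofFinite ι
    simp only [tsum_fintype]
    exact summable_sum fun i _ => (Real.summable_one_div_int_add_rpow (a i) 2).2 one_lt_two
  refine hg.of_norm_bounded_eventually (hfin.eventually_cofinite_notMem.mono fun p hp => ?_)
  have hp : 0 < |(p.1 : ℝ) + a p.2| := abs_pos.2 hp
  rw [Real.rpow_two, norm_pow, Real.norm_eq_abs, ← div_eq_mul_one_div,
    le_div_iff₀ (by positivity), ← mul_pow, mul_comm]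
  exact pow_le_pow_left₀ (by positivity) (hf p) 2

lemma cexp_two_pi_I_mul_add_intCast (x : ℂ) (m : ℤ) :
    cexp (2 * Real.pi * I * (x + m)) = cexp (2 * Real.pi * I * x) := by
  rw [mul_add, exp_add, mul_comm _ (m : ℂ), exp_int_mul_two_pi_mul_I, mul_one]

lemma integral_cexp_mul_deriv {g g' : ℝ → ℂ} {c : ℂ}
    (hg : ∀ t ∈ Set.uIcc (0 : ℝ) 1, HasDerivAt g (g' t) t)
    (hg' : IntervalIntegrable g' volume 0 1) (hbdry : cexp c * g 1 = g 0) :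
    ∫ t in (0 : ℝ)..1, cexp (c * t) * g' t = -c * ∫ t in (0 : ℝ)..1, cexp (c * t) * g t := by
  have hexp : ∀ t : ℝ, HasDerivAt (fun s : ℝ => cexp (c * s)) (c * cexp (c * t)) t := fun t => by
    simpa [mul_comm] using ((hasDerivAt_id (t : ℂ)).const_mul c).cexp.comp_ofReal
  rw [intervalIntegral.integral_mul_deriv_eq_deriv_mul (fun t _ => hexp t) hg
    ((by fun_prop : Continuous _).intervalIntegrable 0 1) hg']
  simp [hbdry, mul_assoc, intervalIntegral.integral_const_mul]

section deriv

variable {F : Type*} [NormedAddCommGroup F] [NormedSpace ℝ F] [CompleteSpace F] {g g' : ℝ → F}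

lemma aestronglyMeasurable_of_forall_hasDerivAt (hg : ∀ t, HasDerivAt g (g' t) t) (μ : Measure ℝ) :
    AEStronglyMeasurable g' μ := by
  rw [show g' = deriv g from funext fun t => (hg t).deriv.symm]
  exact aestronglyMeasurable_deriv g μ

lemma intervalIntegrable_of_forall_hasDerivAt_of_norm_le {C : ℝ} (hg : ∀ t, HasDerivAt g (g' t) t)
    (hbd : ∀ t, ‖g' t‖ ≤ C) (a b : ℝ) : IntervalIntegrable g' volume a b :=
  intervalIntegrable_const.mono_fun' (aestronglyMeasurable_of_forall_hasDerivAt hg _)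
    (Filter.Eventually.of_forall hbd)

end deriv

namespace HilbertBasis

variable {ι 𝕜 E F : Type*} [RCLike 𝕜] [NormedAddCommGroup E] [InnerProductSpace 𝕜 E]
  [NormedAddCommGroup F] [InnerProductSpace 𝕜 F]

lemma hasSum_norm_inner_sq (b : HilbertBasis ι 𝕜 E) (x : E) :
    HasSum (fun i => ‖⟪b i, x⟫_𝕜‖ ^ 2) (‖x‖ ^ 2) := by
  simpa [b.repr_apply_apply, Real.rpow_two] using lp.hasSum_norm (p := 2) (by norm_num) (b.repr x)

lemma mul_norm_le_of_forall_mul_norm_inner_le (b : HilbertBasis ι 𝕜 E) {x y : E} {c : ℝ}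
    (hc : 0 ≤ c) (h : ∀ i, c * ‖⟪b i, x⟫_𝕜‖ ≤ ‖⟪b i, y⟫_𝕜‖) : c * ‖x‖ ≤ ‖y‖ := by
  refine le_of_sq_le_sq ?_ (norm_nonneg y)
  rw [mul_pow]
  refine hasSum_le (fun i => ?_) ((b.hasSum_norm_inner_sq x).mul_left _) (b.hasSum_norm_inner_sq y)
  rw [← mul_pow]
  exact pow_le_pow_left₀ (by positivity) (h i) 2

lemma inner_apply_of_forall_apply_eq_smul (b : HilbertBasis ι 𝕜 E) {T : E →L[𝕜] E} {c : ι → 𝕜}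
    (hT : ∀ i, T (b i) = c i • b i) (j : ι) (x : E) : ⟪b j, T x⟫_𝕜 = c j * ⟪b j, x⟫_𝕜 := by
  classical
  suffices (innerSL 𝕜 (b j)).comp T = c j • innerSL 𝕜 (b j) by
    simpa using congr($this x)
  refine ContinuousLinearMap.ext_on (Submodule.dense_iff_topologicalClosure_eq_top.2 b.dense_span)
    ?_
  rintro _ ⟨i, rfl⟩
  simp only [ContinuousLinearMap.comp_apply, smul_apply, innerSL_apply_apply,
    hT, inner_smul_right, orthonormal_iff_ite.1 b.orthonormal, smul_eq_mul]
  split_ifs with h <;> simp [h]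

lemma inner_comp_sub_comp_apply (b' : HilbertBasis ι 𝕜 F) {J : E →L[𝕜] E} {J' : F →L[𝕜] F}
    {c : 𝕜} {c' : ι → 𝕜} (M : E →L[𝕜] F) (hJ' : ∀ i, J' (b' i) = c' i • b' i) {x : E}
    (hx : J x = c • x) (i : ι) :
    ⟪b' i, (M.comp J - J'.comp M) x⟫_𝕜 = (c - c' i) * ⟪b' i, M x⟫_𝕜 := by
  rw [sub_apply, inner_sub_right, ContinuousLinearMap.comp_apply,
    ContinuousLinearMap.comp_apply, hx, map_smul, inner_smul_right,
    b'.inner_apply_of_forall_apply_eq_smul hJ', sub_mul]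

end HilbertBasis

lemma inner_apply_eq_of_intertwine {𝕜 E F : Type*} [RCLike 𝕜] [NormedAddCommGroup E]
    [InnerProductSpace 𝕜 E] [NormedAddCommGroup F] [InnerProductSpace 𝕜 F] {A : E → E}
    {A' : F →ₗᵢ[𝕜] F} {S T : E →L[𝕜] F} (h : ∀ x, A' (S x) = T (A x)) {v : E} {w : F} {a a' : 𝕜}
    (hv : A v = a • v) (hw : A' w = a' • w) : ⟪w, S v⟫_𝕜 = conj a' * a * ⟪w, T v⟫_𝕜 := by
  rw [← A'.inner_map_map, hw, h, hv, map_smul, inner_smul_left, inner_smul_right, mul_assoc]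

instance : IsProbabilityMeasure unitMeasure :=
  ⟨by simp [unitMeasure]⟩

section eigenFun

variable {n : ℕ} {lam lam' : ℝ} {k k' : ℤ} {w w' : EuclideanSpace ℂ (Fin n)}

lemma norm_eigenFun_apply (t : ℝ) : ‖eigenFun lam k w t‖ = ‖w‖ := by
  rw [eigenFun, norm_smul, norm_exp]
  simp

lemma inner_eigenFun_apply_eigenFun (T : EuclideanSpace ℂ (Fin n) →L[ℂ] EuclideanSpace ℂ (Fin n))
    (t : ℝ) : ⟪eigenFun lam' k' w' t, T (eigenFun lam k w t)⟫_ℂ =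
      cexp (2 * Real.pi * I * ((lam + k - 1 / 2) - (lam' + k' - 1 / 2) : ℝ) * t) * ⟪w', T w⟫_ℂ := by
  simp only [eigenFun, map_smul, inner_smul_left, inner_smul_right, ← exp_conj, ← mul_assoc,
    ← exp_add]
  congr 2
  simp [map_ofNat]
  ring

lemma inner_toLp_eigenFun_toLp {T : ℝ → EuclideanSpace ℂ (Fin n) →L[ℂ] EuclideanSpace ℂ (Fin n)}
    (h' : MemLp (eigenFun lam' k' w') 2 unitMeasure)
    (hT : MemLp (fun t => T t (eigenFun lam k w t)) 2 unitMeasure) :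
    ⟪h'.toLp _, hT.toLp _⟫_ℂ = ∫ t in (0 : ℝ)..1,
      cexp (2 * Real.pi * I * ((lam + k - 1 / 2) - (lam' + k' - 1 / 2) : ℝ) * t) *
        ⟪w', T t w⟫_ℂ := by
  rw [L2.inner_def, intervalIntegral.integral_of_le zero_le_one]
  refine integral_congr_ae ?_
  filter_upwards [h'.coeFn_toLp, hT.coeFn_toLp] with t h1 h2
  rw [h1, h2, inner_eigenFun_apply_eigenFun]

lemma norm_apply_eigenFun_le {T : EuclideanSpace ℂ (Fin n) →L[ℂ] EuclideanSpace ℂ (Fin n)} {C : ℝ}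
    {t : ℝ} (hC : ‖T‖ ≤ C) : ‖T (eigenFun lam k w t)‖ ≤ C * ‖w‖ :=
  (T.le_opNorm _).trans (by rw [norm_eigenFun_apply]; gcongr)

lemma memLp_apply_eigenFun {T : ℝ → EuclideanSpace ℂ (Fin n) →L[ℂ] EuclideanSpace ℂ (Fin n)}
    {C : ℝ} (hT : AEStronglyMeasurable T unitMeasure) (hC : ∀ t, ‖T t‖ ≤ C) :
    MemLp (fun t => T t (eigenFun lam k w t)) 2 unitMeasure := by
  refine MemLp.of_bound ?_ (C * ‖w‖) (Filter.Eventually.of_forall fun t => ?_)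
  · exact (ContinuousLinearMap.apply ℂ _).aestronglyMeasurable_comp₂
      (by unfold eigenFun; fun_prop : Continuous (eigenFun lam k w)).aestronglyMeasurable hT
  · exact norm_apply_eigenFun_le (hC t)

lemma norm_toLp_apply_eigenFun_le {T : ℝ → EuclideanSpace ℂ (Fin n) →L[ℂ] EuclideanSpace ℂ (Fin n)}
    {C : ℝ} (hC : ∀ t, ‖T t‖ ≤ C) (hT : MemLp (fun t => T t (eigenFun lam k w t)) 2 unitMeasure) :
    ‖hT.toLp _‖ ≤ C * ‖w‖ := by
  have hC0 : 0 ≤ C := (norm_nonneg _).trans (hC 0)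
  refine (Lp.norm_le_of_ae_bound (C := C * ‖w‖) (by positivity) ?_).trans_eq
    (by simp [measureUnivNNReal])
  filter_upwards [hT.coeFn_toLp] with t ht
  rw [ht]
  exact norm_apply_eigenFun_le (hC t)

lemma inner_toLp_eigenFun_deriv
    {γ γd : ℝ → EuclideanSpace ℂ (Fin n) →L[ℂ] EuclideanSpace ℂ (Fin n)} {C : ℝ}
    (hγ : ∀ t, HasDerivAt γ (γd t) t) (hC : ∀ t, ‖γd t‖ ≤ C)
    (hbdry : ⟪w', γ 0 w⟫_ℂ = cexp (2 * Real.pi * I * (lam - lam' : ℝ)) * ⟪w', γ 1 w⟫_ℂ)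
    (h' : MemLp (eigenFun lam' k' w') 2 unitMeasure)
    (hγmem : MemLp (fun t => γ t (eigenFun lam k w t)) 2 unitMeasure)
    (hdmem : MemLp (fun t => γd t (eigenFun lam k w t)) 2 unitMeasure) :
    ⟪h'.toLp _, hdmem.toLp _⟫_ℂ =
      -(2 * Real.pi * I * ((lam + k - 1 / 2) - (lam' + k' - 1 / 2) : ℝ)) *
        ⟪h'.toLp _, hγmem.toLp _⟫_ℂ := by
  have hder : ∀ t, HasDerivAt (fun s => ⟪w', γ s w⟫_ℂ) ⟪w', γd t w⟫_ℂ t := fun t =>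
    (((innerSL ℂ w').comp (ContinuousLinearMap.apply ℂ _ w)).restrictScalars
      ℝ).hasFDerivAt.comp_hasDerivAt t (hγ t)
  rw [inner_toLp_eigenFun_toLp, inner_toLp_eigenFun_toLp]
  refine integral_cexp_mul_deriv (fun t _ => hder t)
    (intervalIntegrable_of_forall_hasDerivAt_of_norm_le (C := ‖w'‖ * (C * ‖w‖)) hder
      (fun t => ?_) 0 1) ?_
  · exact (norm_inner_le_norm _ _).trans (by gcongr; exact (γd t).le_of_opNorm_le (hC t) w)
  · rw [hbdry, ← cexp_two_pi_I_mul_add_intCast ((lam - lam' : ℝ) : ℂ) (k - k')]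
    congr 2
    push_cast
    ring

end eigenFun

theorem multiplication_almost_intertwines_JA_general (n : ℕ)
    (A A' : EuclideanSpace ℂ (Fin n) ≃ₗᵢ[ℂ] EuclideanSpace ℂ (Fin n))
    (v v' : OrthonormalBasis (Fin n) ℂ (EuclideanSpace ℂ (Fin n)))
    (lam lam' : Fin n → ℝ)
    (hA : ∀ r, A (v r) = Complex.exp (2 * Real.pi * Complex.I * lam r) • v r)
    (hA' : ∀ r, A' (v' r) = Complex.exp (2 * Real.pi * Complex.I * lam' r) • v' r)
    (γ : ℝ → (EuclideanSpace ℂ (Fin n) →L[ℂ] EuclideanSpace ℂ (Fin n)))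
    (γd : ℝ → (EuclideanSpace ℂ (Fin n) →L[ℂ] EuclideanSpace ℂ (Fin n)))
    (hγderiv : ∀ t, HasDerivAt γ (γd t) t)
    (hγdbd : ∃ C, ∀ t, ‖γd t‖ ≤ C)
    (hbc : ∀ x, A' (γ 0 x) = γ 1 (A x))
    (hmem' : ∀ (k : ℤ) (r : Fin n),
      MeasureTheory.MemLp (eigenFun (lam' r) k (v' r)) 2 unitMeasure)
    (hmemγ : ∀ (k : ℤ) (r : Fin n),
      MeasureTheory.MemLp (fun t => γ t (eigenFun (lam r) k (v r) t)) 2 unitMeasure)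
    (b b' : HilbertBasis (ℤ × Fin n) ℂ
      (MeasureTheory.Lp (EuclideanSpace ℂ (Fin n)) 2 unitMeasure))
    (hb' : ∀ p : ℤ × Fin n, b' p = (hmem' p.1 p.2).toLp (eigenFun (lam' p.2) p.1 (v' p.2)))
    (J J' Mγ : MeasureTheory.Lp (EuclideanSpace ℂ (Fin n)) 2 unitMeasure →L[ℂ]
      MeasureTheory.Lp (EuclideanSpace ℂ (Fin n)) 2 unitMeasure)
    (hJ : ∀ p : ℤ × Fin n,
      J (b p) = (Complex.I * (Real.sign (lam p.2 + p.1 - 1 / 2) : ℂ)) • (b p))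
    (hJ' : ∀ p : ℤ × Fin n,
      J' (b' p) = (Complex.I * (Real.sign (lam' p.2 + p.1 - 1 / 2) : ℂ)) • (b' p))
    (hMγ : ∀ p : ℤ × Fin n,
      Mγ (b p) = (hmemγ p.1 p.2).toLp (fun t => γ t (eigenFun (lam p.2) p.1 (v p.2) t))) :
    Summable fun p : ℤ × Fin n => ‖(Mγ.comp J - J'.comp Mγ) (b p)‖ ^ 2 := by
  obtain ⟨C, hC⟩ := hγdbd
  have hbdry : ∀ r s, ⟪v' s, γ 0 (v r)⟫_ℂ =
      cexp (2 * Real.pi * I * (lam r - lam' s : ℝ)) * ⟪v' s, γ 1 (v r)⟫_ℂ := fun r s => by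
    rw [inner_apply_eq_of_intertwine (A' := A'.toLinearIsometry) hbc (hA r) (hA' s), ← exp_conj,
      ← exp_add]
    congr 2
    simp [map_ofNat]
    ring
  have hmemd : ∀ p : ℤ × Fin n,
      MemLp (fun t => γd t (eigenFun (lam p.2) p.1 (v p.2) t)) 2 unitMeasure := fun p =>
    memLp_apply_eigenFun (aestronglyMeasurable_of_forall_hasDerivAt hγderiv _) hC
  have hcoef : ∀ p q, Real.pi * |lam p.2 + p.1 - 1 / 2| *
      ‖⟪b' q, (Mγ.comp J - J'.comp Mγ) (b p)⟫_ℂ‖ ≤ ‖⟪b' q, (hmemd p).toLp _⟫_ℂ‖ := by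
    intro p q
    rw [b'.inner_comp_sub_comp_apply Mγ hJ' (hJ p), hMγ p, hb' q,
      inner_toLp_eigenFun_deriv hγderiv hC (hbdry _ _)]
    exact pi_mul_abs_mul_norm_sign_sub_sign_mul_le _ _ _
  have hbound : ∀ p : ℤ × Fin n, Real.pi * |lam p.2 + p.1 - 1 / 2| *
      ‖(Mγ.comp J - J'.comp Mγ) (b p)‖ ≤ C := fun p =>
    (b'.mul_norm_le_of_forall_mul_norm_inner_le (by positivity) (hcoef p)).trans
      ((norm_toLp_apply_eigenFun_le hC _).trans_eq (by rw [v.orthonormal.1 p.2, mul_one]))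
  refine summable_sq_of_abs_intCast_add_mul_le (fun r => lam r - 1 / 2) (C := C / Real.pi)
    fun p => ?_
  rw [le_div_iff₀ Real.pi_pos, abs_norm, add_sub_left_comm, ← add_sub_assoc]
  linarith [hbound p]

/-- if `γ : [0,1] → Mat_n(ℂ)` is continuous with (essentially) bounded
derivative and satisfies `A'γ(0) = γ(1)A`, then the multiplication operator `M_γ`
satisfies that `M_γ J_A − J_{A'} M_γ` is Hilbert-Schmidt.  The operators `J_A, J_{A'}`
and `M_γ` are encoded by their action on Hilbert bases of eigenfunctions of
`D_A, D_{A'}`, and the Hilbert-Schmidt property through square-summability over a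
Hilbert basis. -/
theorem multiplication_almost_intertwines_JA (n : ℕ)
    (A A' : EuclideanSpace ℂ (Fin n) ≃ₗᵢ[ℂ] EuclideanSpace ℂ (Fin n))
    (v v' : OrthonormalBasis (Fin n) ℂ (EuclideanSpace ℂ (Fin n)))
    (lam lam' : Fin n → ℝ)
    (hA : ∀ r, A (v r) = Complex.exp (2 * Real.pi * Complex.I * lam r) • v r)
    (hA' : ∀ r, A' (v' r) = Complex.exp (2 * Real.pi * Complex.I * lam' r) • v' r)
    (γ : ℝ → (EuclideanSpace ℂ (Fin n) →L[ℂ] EuclideanSpace ℂ (Fin n)))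
    (hγcont : Continuous γ)
    (γd : ℝ → (EuclideanSpace ℂ (Fin n) →L[ℂ] EuclideanSpace ℂ (Fin n)))
    (hγderiv : ∀ t, HasDerivAt γ (γd t) t)
    (hγdbd : ∃ C, ∀ t, ‖γd t‖ ≤ C)
    (hbc : ∀ x, A' (γ 0 x) = γ 1 (A x))
    (hmem : ∀ (k : ℤ) (r : Fin n), MeasureTheory.MemLp (eigenFun (lam r) k (v r)) 2 unitMeasure)
    (hmem' : ∀ (k : ℤ) (r : Fin n),
      MeasureTheory.MemLp (eigenFun (lam' r) k (v' r)) 2 unitMeasure)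
    (hmemγ : ∀ (k : ℤ) (r : Fin n),
      MeasureTheory.MemLp (fun t => γ t (eigenFun (lam r) k (v r) t)) 2 unitMeasure)
    (b b' : HilbertBasis (ℤ × Fin n) ℂ
      (MeasureTheory.Lp (EuclideanSpace ℂ (Fin n)) 2 unitMeasure))
    (hb : ∀ p : ℤ × Fin n, b p = (hmem p.1 p.2).toLp (eigenFun (lam p.2) p.1 (v p.2)))
    (hb' : ∀ p : ℤ × Fin n, b' p = (hmem' p.1 p.2).toLp (eigenFun (lam' p.2) p.1 (v' p.2)))
    (J J' Mγ : MeasureTheory.Lp (EuclideanSpace ℂ (Fin n)) 2 unitMeasure →L[ℂ]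
      MeasureTheory.Lp (EuclideanSpace ℂ (Fin n)) 2 unitMeasure)
    (hJ : ∀ p : ℤ × Fin n,
      J (b p) = (Complex.I * (Real.sign (lam p.2 + p.1 - 1 / 2) : ℂ)) • (b p))
    (hJ' : ∀ p : ℤ × Fin n,
      J' (b' p) = (Complex.I * (Real.sign (lam' p.2 + p.1 - 1 / 2) : ℂ)) • (b' p))
    (hMγ : ∀ p : ℤ × Fin n,
      Mγ (b p) = (hmemγ p.1 p.2).toLp (fun t => γ t (eigenFun (lam p.2) p.1 (v p.2) t))) :
    Summable fun p : ℤ × Fin n => ‖(Mγ.comp J - J'.comp Mγ) (b p)‖ ^ 2 :=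
  multiplication_almost_intertwines_JA_general n A A' v v' lam lam' hA hA' γ γd hγderiv hγdbd hbc
    hmem' hmemγ b b' hb' J J' Mγ hJ hJ' hMγ
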